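/- Let Σ be a simplicial quasi-projective fan in ℝ^n with convex support of dimension n. Let τ be an interior wall of Σ with τ(1) = {ρ_1,…,ρ_{n−1}} and with adjacent n-dimensional cones generated by τ(1)∪{ρ_n} and τ(1)∪{ρ_{n+1}}, and let Σ_{i=1}^{n+1} a_iρ_i = 0 with a_n > 0, a_{n+1} = 1 be its wall relation, with associated vector a_τ ∈ ℝ^{Σ(1)} ((a_τ)_{ρ_i} = a_i and 0 elsewhere). Suppose τ is extremal, i.e., l_τ spans an extremal ray of NE(Σ) = Σ_{τ'} ℝ_{≥0}·l_{τ'} (meaning l_τ ≠ 0 and whenever l_τ = x + y with x, y ∈ NE(Σ), both x and y are nonnegative multiples of l_τ). Then: (1) P = { ρ_i : a_i > 0 } is a primitive collection for Σ; and (2) the primitive relation vector a_P ∈ ℝ^{Σ(1)} of P equals a_τ up to a positive constant. -/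

import Mathlib

open Set

noncomputable section

/-- Ambient vector space `ℝ^n`. -/
abbrev V (n : ℕ) := Fin n → ℝ

/-- The cone generated by a set of vectors: all finite nonnegative combinations. -/
def coneGen {n : ℕ} (G : Set (V n)) : Set (V n) :=
  { x | ∃ (t : Finset (V n)) (c : V n → ℝ),
      ↑t ⊆ G ∧ (∀ g ∈ t, 0 ≤ c g) ∧ x = ∑ g ∈ t, c g • g }

/-- A vector with integer coordinates. -/
def IsIntegralVec {n : ℕ} (v : V n) : Prop := ∀ i, ∃ z : ℤ, v i = (z : ℝ)

/-- A rational polyhedral cone: generated by finitely many integral vectors. -/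
def IsRatPolyhedralCone {n : ℕ} (σ : Set (V n)) : Prop :=
  ∃ G : Finset (V n), (∀ g ∈ G, IsIntegralVec g) ∧ σ = coneGen ↑G

/-- A strongly convex cone contains no line. -/
def StronglyConvex {n : ℕ} (σ : Set (V n)) : Prop :=
  ∀ x ∈ σ, -x ∈ σ → x = 0

/-- `τ` is a face of the cone `σ`: cut out by a supporting linear functional. -/
def IsFaceOf {n : ℕ} (τ σ : Set (V n)) : Prop :=
  ∃ m : Module.Dual ℝ (V n), (∀ x ∈ σ, 0 ≤ m x) ∧ τ = σ ∩ {x | m x = 0}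

/-- A fan in `ℝ^n`: a finite collection of strongly convex rational polyhedral
cones, closed under taking faces, such that the intersection of any two cones
is a face of each. -/
structure Fan (n : ℕ) where
  cones : Set (Set (V n))
  finite : cones.Finite
  poly : ∀ σ ∈ cones, IsRatPolyhedralCone σ ∧ StronglyConvex σ
  face_mem : ∀ σ ∈ cones, ∀ τ : Set (V n), IsFaceOf τ σ → τ ∈ cones
  inter_face : ∀ σ ∈ cones, ∀ σ' ∈ cones,
    IsFaceOf (σ ∩ σ') σ ∧ IsFaceOf (σ ∩ σ') σ'

/-- The support of a fan: the union of its cones. -/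
def Fan.support {n : ℕ} (F : Fan n) : Set (V n) := ⋃ σ ∈ F.cones, σ

/-- The dimension of a cone: the dimension of its linear span. -/
def dimCone {n : ℕ} (σ : Set (V n)) : ℕ :=
  Module.finrank ℝ (Submodule.span ℝ σ)

/-- `Σ(k)`: the set of `k`-dimensional cones of the fan. -/
def Fan.conesDim {n : ℕ} (F : Fan n) (k : ℕ) : Set (Set (V n)) :=
  {σ | σ ∈ F.cones ∧ dimCone σ = k}

/-- The ray generated by a vector. -/
def ray {n : ℕ} (v : V n) : Set (V n) := {x | ∃ t : ℝ, 0 ≤ t ∧ x = t • v}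

/-- A primitive lattice vector: integral, nonzero, and not a nontrivial
positive integer multiple of an integral vector. -/
def IsPrimitiveVec {n : ℕ} (v : V n) : Prop :=
  IsIntegralVec v ∧ v ≠ 0 ∧
    ∀ (w : V n) (k : ℕ), IsIntegralVec w → v = (k : ℝ) • w → k = 1

/-- `Σ(1)`, identified with the set of primitive generators of the rays of the fan. -/
def Fan.rayGens {n : ℕ} (F : Fan n) : Set (V n) :=
  { v | IsPrimitiveVec v ∧ ray v ∈ F.cones }

/-- `σ(1)`: the primitive generators of the 1-dimensional faces of the cone `σ`. -/
def coneRays {n : ℕ} (σ : Set (V n)) : Set (V n) :=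
  { v | IsPrimitiveVec v ∧ IsFaceOf (ray v) σ }

/-- `φ ∈ PL(Σ)`: `φ` is linear on each cone of the fan. -/
def IsPL {n : ℕ} (F : Fan n) (φ : V n → ℝ) : Prop :=
  ∀ σ ∈ F.cones, ∃ m : Module.Dual ℝ (V n), ∀ x ∈ σ, φ x = m x

/-- Convexity of a piecewise-linear function on the support of the fan. -/
def IsConvexPLF {n : ℕ} (F : Fan n) (φ : V n → ℝ) : Prop :=
  ∀ u ∈ F.support, ∀ v ∈ F.support, φ (u + v) ≤ φ u + φ v

/-- Strict convexity: strict inequality whenever `u, v` lie in no common cone. -/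
def IsStrictlyConvexPLF {n : ℕ} (F : Fan n) (φ : V n → ℝ) : Prop :=
  ∀ u ∈ F.support, ∀ v ∈ F.support,
    (¬ ∃ σ ∈ F.cones, u ∈ σ ∧ v ∈ σ) → φ (u + v) < φ u + φ v

/-- A fan is quasi-projective if it carries a strictly convex piecewise-linear function. -/
def Fan.QuasiProjective {n : ℕ} (F : Fan n) : Prop :=
  ∃ φ : V n → ℝ, IsPL F φ ∧ IsStrictlyConvexPLF F φ

/-- A fan is simplicial if each of its cones is generated by linearly independent vectors. -/
def Fan.Simplicial {n : ℕ} (F : Fan n) : Prop :=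
  ∀ σ ∈ F.cones, ∃ G : Finset (V n),
    LinearIndependent ℝ (fun g : {x // x ∈ G} => (g : V n)) ∧ σ = coneGen ↑G

/-- `F'` refines `F`: same support, and every cone of `F'` lies in a cone of `F`. -/
def Fan.Refines {n : ℕ} (F' F : Fan n) : Prop :=
  F'.support = F.support ∧ ∀ σ' ∈ F'.cones, ∃ σ ∈ F.cones, σ' ⊆ σ

/-- A primitive collection: a set of rays of the fan contained in no single cone
of the fan, every proper subset of which is contained in some cone. -/
def IsPrimColl {n : ℕ} (F : Fan n) (P : Finset (V n)) : Prop :=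
  ↑P ⊆ F.rayGens ∧ (∀ σ ∈ F.cones, ¬ (↑P ⊆ σ)) ∧
    ∀ Q : Finset (V n), Q ⊂ P → ∃ σ ∈ F.cones, ↑Q ⊆ σ

/-- The subspace `PL(Σ)` of piecewise-linear functions, as a submodule of functions. -/
def PLsub {n : ℕ} (F : Fan n) : Submodule ℝ (V n → ℝ) where
  carrier := {φ | IsPL F φ}
  add_mem' := by
    intro φ ψ hφ hψ σ hσ
    obtain ⟨m1, h1⟩ := hφ σ hσ
    obtain ⟨m2, h2⟩ := hψ σ hσ
    exact ⟨m1 + m2, fun x hx => by simp [Pi.add_apply, h1 x hx, h2 x hx]⟩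
  zero_mem' := by
    intro σ hσ
    exact ⟨0, fun x hx => rfl⟩
  smul_mem' := by
    intro c φ hφ σ hσ
    obtain ⟨m, h⟩ := hφ σ hσ
    exact ⟨c • m, fun x hx => by simp [Pi.smul_apply, h x hx]⟩

/-- Evaluation at a point, as an element of `PL(Σ)*`. -/
def evalPL {n : ℕ} (F : Fan n) (x : V n) : Module.Dual ℝ (PLsub F) where
  toFun φ := (φ : V n → ℝ) x
  map_add' φ ψ := rfl
  map_smul' c φ := rfl

/-- The cone `CPL(Σ)` of convex piecewise-linear functions, inside `PL(Σ)`. -/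
def CPLs {n : ℕ} (F : Fan n) : Set (PLsub F) :=
  {φ | IsConvexPLF F (φ : V n → ℝ)}

/-- The Mori cone `NE(Σ) ⊆ PL(Σ)*`: the dual cone of `CPL(Σ)`. -/
def NE {n : ℕ} (F : Fan n) : Set (Module.Dual ℝ (PLsub F)) :=
  {ℓ | ∀ φ ∈ CPLs F, 0 ≤ ℓ φ}

/-- An interior wall: an `(n-1)`-dimensional cone of the fan not contained in the
topological boundary of the support. -/
def Fan.IsInteriorWall {n : ℕ} (F : Fan n) (τ : Set (V n)) : Prop :=
  τ ∈ F.cones ∧ dimCone τ = n - 1 ∧ ¬ (τ ⊆ frontier F.support)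

/-- The data of a wall relation for an interior wall `τ = σ ∩ σ'`:
`n-1` linearly independent rays of `τ`, rays `ρn ∈ σ(1) ∖ τ(1)` and
`ρn' ∈ σ'(1) ∖ τ(1)`, and coefficients with `aₙ > 0` and
`a₁ρ₁ + ⋯ + aₙρₙ + ρₙ₊₁ = 0`. -/
structure WallRelData (n : ℕ) (τ σ σ' : Set (V n)) where
  ρ : Fin (n - 1) → V n
  ρn : V n
  ρn' : V n
  a : Fin (n - 1) → ℝ
  an : ℝ
  ρ_mem : ∀ i, ρ i ∈ coneRays τ
  ρ_indep : LinearIndependent ℝ ρ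
  ρn_mem : ρn ∈ coneRays σ \ coneRays τ
  ρn'_mem : ρn' ∈ coneRays σ' \ coneRays τ
  an_pos : 0 < an
  rel : (∑ i, a i • ρ i) + an • ρn + ρn' = 0

/-- The functional `l_τ` on functions associated to a wall relation. -/
def WallRelData.funct {n : ℕ} {τ σ σ' : Set (V n)} (w : WallRelData n τ σ σ')
    (φ : V n → ℝ) : ℝ :=
  (∑ i, w.a i * φ (w.ρ i)) + w.an * φ w.ρn + φ w.ρn'

/-- The functional `l_τ ∈ PL(Σ)*` associated to a wall relation. -/
def WallRelData.dual {n : ℕ} (F : Fan n) {τ σ σ' : Set (V n)}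
    (w : WallRelData n τ σ σ') : Module.Dual ℝ (PLsub F) :=
  (∑ i, w.a i • evalPL F (w.ρ i)) + w.an • evalPL F w.ρn + evalPL F w.ρn'

/-- `ℓ ∈ PL(Σ)*` is (a choice of) the wall-relation functional of some interior wall. -/
def IsWallFunctional {n : ℕ} (F : Fan n) (ℓ : Module.Dual ℝ (PLsub F)) : Prop :=
  ∃ (τ σ σ' : Set (V n)) (w : WallRelData n τ σ σ'),
    F.IsInteriorWall τ ∧ σ ∈ F.conesDim n ∧ σ' ∈ F.conesDim n ∧
      τ = σ ∩ σ' ∧ ℓ = w.dual F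

/-- `σ` is the minimal cone of the fan containing `x`. -/
def IsMinimalConeContaining {n : ℕ} (F : Fan n) (x : V n) (σ : Set (V n)) : Prop :=
  σ ∈ F.cones ∧ x ∈ σ ∧ ∀ σ' ∈ F.cones, x ∈ σ' → σ ⊆ σ'

/-- A primitive relation for the primitive collection `P`: a linearly independent
subset `S ⊆ σ(1)` of the minimal cone `σ` containing `∑_{ρ∈P} ρ` together with
positive coefficients `b` with `∑_{ρ∈P} ρ = ∑_{ρ∈S} b_ρ ρ`. -/
def IsPrimRel {n : ℕ} (F : Fan n) (P S : Finset (V n)) (b : V n → ℝ) : Prop :=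
  ∃ σ : Set (V n), IsMinimalConeContaining F (∑ ρ ∈ P, ρ) σ ∧
    ↑S ⊆ coneRays σ ∧
    LinearIndependent ℝ (fun s : {x // x ∈ S} => (s : V n)) ∧
    (∀ ρ ∈ S, 0 < b ρ) ∧ (∑ ρ ∈ P, ρ) = ∑ ρ ∈ S, b ρ • ρ

open scoped Classical in
/-- The vector `a_P ∈ ℝ^{Σ(1)}` associated to a primitive relation. -/
def primVec {n : ℕ} (P S : Finset (V n)) (b : V n → ℝ) : V n → ℝ := fun ρ =>
  if ρ ∈ P then (if ρ ∈ S then 1 - b ρ else 1)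
  else (if ρ ∈ S then -b ρ else 0)

/-- The functional `l_P ∈ PL(Σ)*` of a primitive collection:
`φ ↦ ∑_{ρ∈P} φ(ρ) − φ(∑_{ρ∈P} ρ)`. -/
def primDual {n : ℕ} (F : Fan n) (P : Finset (V n)) : Module.Dual ℝ (PLsub F) :=
  (∑ ρ ∈ P, evalPL F ρ) - evalPL F (∑ ρ ∈ P, ρ)

/-!
The wall functional `l = ∑ aᵢ ev(ρᵢ)` equals the convexity defect
`φ ↦ ∑_{aᵢ>0} aᵢ φ(ρᵢ) - φ(∑_{aᵢ>0} aᵢ ρᵢ)`, because the rays with `aᵢ ≤ 0` lie in `τ`, on which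
every `φ ∈ PL(Σ)` is linear. Hence `l ≠ 0` forces `P` out of every cone. Lowering the coefficients
of a convexity defect lowers it in the order of `NE(Σ)`, so by extremality every such smaller
defect is a nonnegative multiple of `l`. Dropping one ray `ρ` of `P` gives a multiple that vanishes
(test it against the hat function of `ρ`), and a strictly convex function then puts the other rays
of `P` into one cone. Taking all coefficients equal to `min aᵢ` gives a multiple of `l_P`, and
testing `l_P` and `l` against the hat function of each ray compares `a_P` with `a_τ`.
-/

section Cones

variable {n : ℕ}

theorem coneGen_eq_hull (S : Set (V n)) : coneGen S = (PointedCone.hull ℝ S : Set (V n)) := by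
  ext x
  constructor
  · rintro ⟨t, c, htS, hc, rfl⟩
    refine Submodule.sum_mem _ fun g hg => ?_
    rw [← Nonneg.mk_smul (c g) (hc g hg)]
    exact Submodule.smul_mem _ _ (Submodule.subset_span (htS hg))
  · intro hx
    obtain ⟨f, t, htS, -, rfl⟩ := Submodule.mem_span_iff_exists_finset_subset.mp hx
    exact ⟨t, fun g => f g, htS, fun g _ => (f g).2,
      Finset.sum_congr rfl fun g _ => Nonneg.coe_smul (f g) g⟩

theorem subset_coneGen (S : Set (V n)) : S ⊆ coneGen S := by
  rw [coneGen_eq_hull]; exact PointedCone.subset_hull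

theorem Fan.exists_pointedCone {F : Fan n} {σ : Set (V n)} (hσ : σ ∈ F.cones) :
    ∃ C : PointedCone ℝ (V n), σ = C := by
  obtain ⟨⟨G, -, rfl⟩, -⟩ := F.poly σ hσ
  exact ⟨_, coneGen_eq_hull _⟩

theorem Fan.sum_smul_mem {F : Fan n} {σ : Set (V n)} (hσ : σ ∈ F.cones) {ι : Type*}
    {s : Finset ι} {c : ι → ℝ} {x : ι → V n} (hc : ∀ i ∈ s, 0 ≤ c i)
    (hx : ∀ i ∈ s, x i ∈ σ) : ∑ i ∈ s, c i • x i ∈ σ := by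
  obtain ⟨C, rfl⟩ := F.exists_pointedCone hσ
  refine Submodule.sum_mem _ fun i hi => ?_
  rw [← Nonneg.mk_smul (c i) (hc i hi)]
  exact Submodule.smul_mem _ _ (hx i hi)

theorem Fan.add_mem {F : Fan n} {σ : Set (V n)} (hσ : σ ∈ F.cones) {x y : V n} (hx : x ∈ σ)
    (hy : y ∈ σ) : x + y ∈ σ := by
  obtain ⟨C, rfl⟩ := F.exists_pointedCone hσ
  exact C.add_mem hx hy

theorem Fan.smul_mem {F : Fan n} {σ : Set (V n)} (hσ : σ ∈ F.cones) {t : ℝ} (ht : 0 ≤ t)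
    {x : V n} (hx : x ∈ σ) : t • x ∈ σ := by
  simpa using F.sum_smul_mem hσ (s := {()}) (c := fun _ => t) (x := fun _ => x)
    (by simpa using ht) (by simpa using hx)

theorem Fan.zero_mem {F : Fan n} {σ : Set (V n)} (hσ : σ ∈ F.cones) : (0 : V n) ∈ σ := by
  simpa using F.sum_smul_mem hσ (s := (∅ : Finset Unit)) (c := 0) (x := 0) (by simp) (by simp)

theorem Fan.coneGen_subset {F : Fan n} {σ : Set (V n)} (hσ : σ ∈ F.cones) {S : Set (V n)}
    (hS : S ⊆ σ) : coneGen S ⊆ σ := by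
  rintro x ⟨t, c, htS, hc, rfl⟩
  exact F.sum_smul_mem hσ hc fun g hg => hS (htS hg)

theorem LinearMap.eqOn_coneGen {m m' : Module.Dual ℝ (V n)} {S : Set (V n)}
    (h : Set.EqOn m m' S) : Set.EqOn m m' (coneGen S) := by
  rintro x ⟨t, c, htS, -, rfl⟩
  simp only [map_sum, map_smul]
  exact Finset.sum_congr rfl fun g hg => by rw [h (htS hg)]

theorem LinearMap.nonneg_on_coneGen {m : Module.Dual ℝ (V n)} {S : Set (V n)}
    (h : ∀ x ∈ S, 0 ≤ m x) : ∀ x ∈ coneGen S, 0 ≤ m x := by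
  rintro x ⟨t, c, htS, hc, rfl⟩
  simp only [map_sum, map_smul, smul_eq_mul]
  exact Finset.sum_nonneg fun g hg => mul_nonneg (hc g hg) (h g (htS hg))

theorem IsFaceOf.subset {τ σ : Set (V n)} (h : IsFaceOf τ σ) : τ ⊆ σ := by
  obtain ⟨m, -, rfl⟩ := h
  exact inter_subset_left

theorem IsFaceOf.refl (σ : Set (V n)) : IsFaceOf σ σ :=
  ⟨0, by simp, by simp⟩

theorem IsFaceOf.mem_of_sum_smul_mem {τ σ : Set (V n)} (h : IsFaceOf τ σ) {ι : Type*}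
    {s : Finset ι} {c : ι → ℝ} {x : ι → V n} (hc : ∀ i ∈ s, 0 ≤ c i)
    (hx : ∀ i ∈ s, 0 < c i → x i ∈ σ) (hτ : ∑ i ∈ s, c i • x i ∈ τ) :
    ∀ i ∈ s, 0 < c i → x i ∈ τ := by
  obtain ⟨m, hm, rfl⟩ := h
  have hterm : ∀ i ∈ s, 0 ≤ c i * m (x i) := fun i hi =>
    (hc i hi).eq_or_lt.elim (fun h => by simp [← h]) fun h => mul_nonneg h.le (hm _ (hx i hi h))
  have hsum : ∑ i ∈ s, c i * m (x i) = 0 := by simpa using hτ.2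
  intro i hi hci
  have hzero := (Finset.sum_eq_zero_iff_of_nonneg hterm).mp hsum i hi
  exact ⟨hx i hi hci, (mul_eq_zero.mp hzero).resolve_left hci.ne'⟩

end Cones

section Primitive

variable {n : ℕ}

theorem exists_isPrimitiveVec_smul {v : V n} (hv : IsIntegralVec v) (hv0 : v ≠ 0) :
    ∃ p : V n, IsPrimitiveVec p ∧ ∃ c : ℝ, 0 < c ∧ v = c • p := by
  choose z hz using hv
  set d : ℕ := Finset.univ.gcd fun i => (z i).natAbs
  have hd0 : d ≠ 0 := by
    intro h
    refine hv0 (funext fun i => ?_)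
    simp [hz i, Int.natAbs_eq_zero.mp (Finset.gcd_eq_zero_iff.mp h i (Finset.mem_univ i))]
  have hdvd : ∀ i, (d : ℤ) ∣ z i := fun i =>
    Int.natCast_dvd.mpr (Finset.gcd_dvd (Finset.mem_univ i))
  choose w hw using hdvd
  have hvp : v = (d : ℝ) • fun i => (w i : ℝ) := funext fun i => by simp [hz i, hw i]
  refine ⟨fun i => (w i : ℝ), ⟨fun i => ⟨w i, rfl⟩, fun h => hv0 (by simp [hvp, h]), ?_⟩,
    d, by positivity, hvp⟩
  intro q k hq hwq
  choose y hy using hq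
  have hk : ∀ i, d * k ∣ (z i).natAbs := fun i => by
    have h := congrFun hwq i
    simp only [Pi.smul_apply, smul_eq_mul, hy i] at h
    have : w i = k * y i := by exact_mod_cast h
    rw [hw i, this, ← mul_assoc, Int.natAbs_mul]
    exact ⟨(y i).natAbs, by simp [Int.natAbs_mul]⟩
  have : d * k ∣ d * 1 := by simpa using Finset.dvd_gcd fun i _ => hk i
  exact Nat.dvd_one.mp ((Nat.mul_dvd_mul_iff_left (Nat.pos_of_ne_zero hd0)).mp this)

/-- Write `t` as a reduced fraction `num / den`: then `den` divides every coordinate of `p` and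
`num` every coordinate of `q`. -/
theorem IsPrimitiveVec.eq_of_eq_smul {p q : V n} (hp : IsPrimitiveVec p)
    (hq : IsPrimitiveVec q) {t : ℝ} (ht : 0 < t) (hqt : q = t • p) : q = p := by
  obtain ⟨hpi, hp0, hpprim⟩ := hp
  obtain ⟨hqi, -, hqprim⟩ := hq
  choose zp hzp using hpi
  choose zq hzq using hqi
  obtain ⟨i₀, hi₀⟩ : ∃ i, p i ≠ 0 := by
    by_contra! h; exact hp0 (funext h)
  set r : ℚ := zq i₀ / zp i₀
  have hrt : (r : ℝ) = t := by
    have : q i₀ = t * p i₀ := congrFun hqt i₀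
    rw [hzq, hzp] at this
    rw [hzp] at hi₀
    simp only [r, Rat.cast_div, Rat.cast_intCast, this]
    field_simp
  have hr : 0 < r := by exact_mod_cast hrt ▸ ht
  have hcross : ∀ j, (r.den : ℤ) * zq j = r.num * zp j := fun j => by
    have h1 : (r.den : ℝ) * q j = r.num * p j := by
      rw [hqt, Pi.smul_apply, smul_eq_mul, ← hrt, Rat.cast_def]
      field_simp
    rw [hzq, hzp] at h1
    exact_mod_cast h1
  have hden : r.den = 1 := by
    have hdvd : ∀ j, (r.den : ℤ) ∣ zp j := fun j =>
      Int.dvd_of_dvd_mul_right_of_gcd_one ⟨zq j, (hcross j).symm⟩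
        (by rw [Int.gcd_comm]; exact r.reduced)
    choose y hy using hdvd
    exact hpprim (fun j => y j) r.den (fun j => ⟨y j, rfl⟩) (funext fun j => by simp [hzp, hy])
  have hnum : r.num.toNat = 1 := by
    have hnum0 : 0 ≤ r.num := (Rat.num_pos.mpr hr).le
    refine hqprim p r.num.toNat (fun j => ⟨zp j, hzp j⟩) (funext fun j => ?_)
    have := hcross j
    rw [hden] at this
    simp only [Pi.smul_apply, smul_eq_mul, hzq, hzp]
    exact_mod_cast (by simpa [Int.toNat_of_nonneg hnum0] using this)
  have hr1 : r = 1 := by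
    rw [← Rat.num_div_den r, hden]
    have : r.num = 1 := by omega
    simp [this]
  rw [hqt, ← hrt, hr1, Rat.cast_one, one_smul]

theorem ray_smul {v : V n} {s : ℝ} (hs : 0 < s) : ray (s • v) = ray v := by
  ext x
  constructor
  · rintro ⟨t, ht, rfl⟩
    exact ⟨t * s, by positivity, by rw [smul_smul]⟩
  · rintro ⟨t, ht, rfl⟩
    exact ⟨t / s, by positivity, by rw [smul_smul, div_mul_cancel₀ _ hs.ne']⟩

theorem mem_ray_self (v : V n) : v ∈ ray v := ⟨1, zero_le_one, (one_smul _ _).symm⟩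

theorem coneRays_subset (σ : Set (V n)) : coneRays σ ⊆ σ := fun r hr =>
  hr.2.subset (mem_ray_self r)

theorem Fan.exists_isPrimitiveVec_smul_of_ray_mem {F : Fan n} {g : V n} (hg : ray g ∈ F.cones)
    (hg0 : g ≠ 0) : ∃ p : V n, IsPrimitiveVec p ∧ ∃ s : ℝ, 0 < s ∧ g = s • p := by
  obtain ⟨⟨G, hGint, hGray⟩, -⟩ := F.poly _ hg
  obtain ⟨w, hwG, hw0⟩ : ∃ w ∈ G, w ≠ 0 := by
    by_contra! h
    obtain ⟨t, c, htG, -, hgt⟩ := hGray ▸ mem_ray_self g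
    exact hg0 (hgt.trans (Finset.sum_eq_zero fun x hx => by simp [h x (htG hx)]))
  obtain ⟨t, ht0, rfl⟩ : w ∈ ray g := hGray ▸ subset_coneGen _ hwG
  have ht : 0 < t := ht0.lt_of_ne (by rintro rfl; simp at hw0)
  obtain ⟨p, hp, c, hc, hpc⟩ := exists_isPrimitiveVec_smul (hGint _ hwG) hw0
  refine ⟨p, hp, c / t, by positivity, ?_⟩
  rw [div_eq_inv_mul, mul_smul, ← hpc, smul_smul, inv_mul_cancel₀ ht.ne', one_smul]

end Primitive

section Simplicial

variable {n : ℕ}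

theorem LinearIndepOn.exists_dual_eqOn {K W : Type*} [Field K] [AddCommGroup W] [Module K W]
    {s : Set W} (hs : LinearIndepOn K id s) (f : W → K) :
    ∃ m : Module.Dual K W, ∀ x ∈ s, m x = f x := by
  refine ⟨(Module.Basis.extend hs).constr K fun i => f i, fun x hx => ?_⟩
  simpa using (Module.Basis.extend hs).constr_basis K (fun i => f i) ⟨x, hs.subset_extend _ hx⟩

theorem smul_mem_coneGen {S : Set (V n)} {t : ℝ} (ht : 0 ≤ t) {x : V n} (hx : x ∈ S) :
    t • x ∈ coneGen S := by
  rw [coneGen_eq_hull, ← Nonneg.mk_smul t ht]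
  exact Submodule.smul_mem _ _ (Submodule.subset_span hx)

theorem coneGen_subset_coneGen {S T : Set (V n)} (h : S ⊆ coneGen T) : coneGen S ⊆ coneGen T := by
  rw [coneGen_eq_hull, coneGen_eq_hull] at *
  exact Submodule.span_le.mpr h

theorem isFaceOf_ray_of_linearIndepOn {S : Set (V n)} (hS : LinearIndepOn ℝ id S) {g : V n}
    (hg : g ∈ S) : IsFaceOf (ray g) (coneGen S) := by
  classical
  obtain ⟨m, hm⟩ := hS.exists_dual_eqOn fun x => if x = g then 0 else 1
  have hm0 : ∀ x ∈ S, 0 ≤ m x := fun x hx => by rw [hm x hx]; split_ifs <;> norm_num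
  refine ⟨m, LinearMap.nonneg_on_coneGen hm0, Set.ext fun x => ⟨?_, ?_⟩⟩
  · rintro ⟨t, ht, rfl⟩
    exact ⟨smul_mem_coneGen ht hg, by simp [hm g hg]⟩
  · rintro ⟨⟨t, c, htS, hc, rfl⟩, hmx⟩
    have hterm : ∀ h ∈ t, 0 ≤ c h * m h := fun h hh => mul_nonneg (hc h hh) (hm0 h (htS hh))
    have hzero := (Finset.sum_eq_zero_iff_of_nonneg hterm).mp (by simpa using hmx)
    have hcz : ∀ h ∈ t, h ≠ g → c h = 0 := fun h hh hhg => by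
      simpa [hm h (htS hh), hhg] using hzero h hh
    by_cases hgt : g ∈ t
    · rw [Finset.sum_eq_single_of_mem g hgt fun h hh hhg => by rw [hcz h hh hhg, zero_smul]]
      exact ⟨c g, hc g hgt, rfl⟩
    · rw [Finset.sum_eq_zero fun h hh => by rw [hcz h hh (ne_of_mem_of_not_mem hh hgt), zero_smul]]
      exact ⟨0, le_rfl, (zero_smul _ _).symm⟩

theorem IsFaceOf.exists_mem_eq_smul_of_mem_coneRays {S δ : Set (V n)}
    (hδ : IsFaceOf δ (coneGen S)) {r : V n} (hr : r ∈ coneRays δ) :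
    ∃ g ∈ S, ∃ s : ℝ, 0 < s ∧ g = s • r := by
  obtain ⟨t, c, htS, hc, hrt⟩ := hδ.subset (coneRays_subset δ hr)
  obtain ⟨g, hgt, hcg⟩ := Finset.exists_ne_zero_of_sum_ne_zero (hrt ▸ hr.1.2.1)
  have hcg0 : 0 < c g := (hc g hgt).lt_of_ne' (by rintro h; simp [h] at hcg)
  have hδt : ∀ h ∈ t, 0 < c h → h ∈ δ :=
    hδ.mem_of_sum_smul_mem hc (fun h hh _ => subset_coneGen S (htS hh)) (hrt ▸ coneRays_subset δ hr)
  obtain ⟨s, hs, hgs⟩ := hr.2.mem_of_sum_smul_mem hc hδt (hrt ▸ mem_ray_self r) g hgt hcg0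
  refine ⟨g, htS hgt, s, hs.lt_of_ne ?_, hgs⟩
  rintro rfl
  simp [hgs] at hcg

theorem Fan.Simplicial.coneRays_spec {F : Fan n} (hsimp : F.Simplicial) {σ : Set (V n)}
    (hσ : σ ∈ F.cones) :
    LinearIndepOn ℝ id (coneRays σ) ∧ σ = coneGen (coneRays σ) ∧
      ∀ δ, IsFaceOf δ σ → coneRays δ ⊆ coneRays σ := by
  obtain ⟨G, hGind, rfl⟩ := hsimp σ hσ
  have hG : LinearIndepOn ℝ id (G : Set (V n)) := hGind
  have hgen : ∀ g ∈ G, ∃ r ∈ coneRays (coneGen G), ∃ s : ℝ, 0 < s ∧ g = s • r := by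
    intro g hg
    have hface := isFaceOf_ray_of_linearIndepOn hG hg
    obtain ⟨p, hp, s, hs, rfl⟩ :=
      F.exists_isPrimitiveVec_smul_of_ray_mem (F.face_mem _ hσ _ hface) (hG.ne_zero hg)
    exact ⟨p, ⟨hp, ray_smul hs ▸ hface⟩, s, hs, rfl⟩
  choose! N hN s hs hgs using hgen
  have hsub : ∀ δ, IsFaceOf δ (coneGen G) → coneRays δ ⊆ N '' G := by
    intro δ hδ r hr
    obtain ⟨g, hg, t, ht, hgt⟩ := hδ.exists_mem_eq_smul_of_mem_coneRays hr
    refine ⟨g, hg, ((hN g hg).1.eq_of_eq_smul hr.1 (div_pos (hs g hg) ht) ?_).symm⟩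
    rw [div_eq_inv_mul, mul_smul, ← hgs g hg, hgt, smul_smul, inv_mul_cancel₀ ht.ne', one_smul]
  have hrays : coneRays (coneGen G) = N '' G :=
    (hsub _ (IsFaceOf.refl _)).antisymm (Set.image_subset_iff.mpr hN)
  refine ⟨?_, ?_, fun δ hδ => hrays ▸ hsub δ hδ⟩
  · rw [hrays]
    refine LinearIndepOn.id_image (?_ : LinearIndependent ℝ fun g : (G : Set (V n)) => N g)
    have := hG.units_smul fun g => Units.mk0 (s g)⁻¹ (inv_ne_zero (hs g g.2).ne')
    convert this using 1
    funext g
    rw [Pi.smul_apply', Units.smul_def, Units.val_mk0, eq_inv_smul_iff₀ (hs g g.2).ne', ← hgs g g.2,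
      id]
  · refine (coneGen_subset_coneGen fun g hg => ?_).antisymm
      (F.coneGen_subset hσ (coneRays_subset _))
    rw [hgs g hg]
    exact smul_mem_coneGen (hs g hg).le (hN g hg)

end Simplicial

section Hat

variable {n : ℕ} {F : Fan n}

theorem Fan.mem_support_iff {x : V n} : x ∈ F.support ↔ ∃ σ ∈ F.cones, x ∈ σ := by
  simp [Fan.support]

theorem Fan.coneRays_subset_rayGens {σ : Set (V n)} (hσ : σ ∈ F.cones) :
    coneRays σ ⊆ F.rayGens := fun _ hr => ⟨hr.1, F.face_mem σ hσ _ hr.2⟩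

theorem Fan.mem_support_of_mem_rayGens {r : V n} (hr : r ∈ F.rayGens) : r ∈ F.support :=
  Fan.mem_support_iff.mpr ⟨_, hr.2, mem_ray_self r⟩

theorem Fan.exists_isPL_of_eqOn (m : Set (V n) → Module.Dual ℝ (V n))
    (hm : ∀ σ ∈ F.cones, ∀ γ ∈ F.cones, Set.EqOn (m σ) (m γ) (σ ∩ γ)) :
    ∃ φ : V n → ℝ, ∀ σ ∈ F.cones, ∀ x ∈ σ, φ x = m σ x := by
  classical
  refine ⟨fun x => if h : ∃ σ ∈ F.cones, x ∈ σ then m h.choose x else 0, fun σ hσ x hx => ?_⟩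
  have h : ∃ σ ∈ F.cones, x ∈ σ := ⟨σ, hσ, hx⟩
  simp only [dif_pos h]
  exact hm _ h.choose_spec.1 σ hσ ⟨h.choose_spec.2, hx⟩

theorem Fan.exists_hat (hsimp : F.Simplicial) (v : V n) :
    ∃ φ : V n → ℝ, IsPL F φ ∧ (∀ w ∈ F.rayGens, φ w = if v = w then 1 else 0) ∧
      ∀ x ∈ F.support, 0 ≤ φ x := by
  classical
  have hm : ∀ σ, ∃ m : Module.Dual ℝ (V n),
      σ ∈ F.cones → ∀ r ∈ coneRays σ, m r = if v = r then 1 else 0 := fun σ => by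
    by_cases hσ : σ ∈ F.cones
    · obtain ⟨m, hm⟩ := (hsimp.coneRays_spec hσ).1.exists_dual_eqOn fun r => if v = r then 1 else 0
      exact ⟨m, fun _ => hm⟩
    · exact ⟨0, fun h => absurd h hσ⟩
  choose m hm using hm
  obtain ⟨φ, hφ⟩ := F.exists_isPL_of_eqOn m fun σ hσ γ hγ => by
    have hδ := F.inter_face σ hσ γ hγ
    rw [(hsimp.coneRays_spec (F.face_mem σ hσ _ hδ.1)).2.1]
    refine LinearMap.eqOn_coneGen fun r hr => ?_
    rw [hm σ hσ r ((hsimp.coneRays_spec hσ).2.2 _ hδ.1 hr),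
      hm γ hγ r ((hsimp.coneRays_spec hγ).2.2 _ hδ.2 hr)]
  refine ⟨φ, fun σ hσ => ⟨m σ, hφ σ hσ⟩, fun w hw => ?_, fun x hx => ?_⟩
  · rw [hφ _ hw.2 w (mem_ray_self w)]
    exact hm _ hw.2 w ⟨hw.1, IsFaceOf.refl _⟩
  · obtain ⟨σ, hσ, hxσ⟩ := Fan.mem_support_iff.mp hx
    rw [hφ σ hσ x hxσ]
    rw [(hsimp.coneRays_spec hσ).2.1] at hxσ
    exact LinearMap.nonneg_on_coneGen (fun r hr => by rw [hm σ hσ r hr]; split_ifs <;> norm_num)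
      x hxσ

noncomputable def Fan.hat (hsimp : F.Simplicial) (v : V n) : PLsub F :=
  ⟨(F.exists_hat hsimp v).choose, (F.exists_hat hsimp v).choose_spec.1⟩

theorem Fan.hat_apply_of_mem_rayGens (hsimp : F.Simplicial) (v : V n) {w : V n}
    (hw : w ∈ F.rayGens) : (F.hat hsimp v : V n → ℝ) w = if v = w then 1 else 0 :=
  (F.exists_hat hsimp v).choose_spec.2.1 w hw

theorem Fan.hat_nonneg (hsimp : F.Simplicial) (v : V n) {x : V n} (hx : x ∈ F.support) :
    0 ≤ (F.hat hsimp v : V n → ℝ) x :=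
  (F.exists_hat hsimp v).choose_spec.2.2 x hx

end Hat

section Convexity

variable {n : ℕ} {F : Fan n} {ι : Type*}

theorem Fan.smul_mem_support {x : V n} (hx : x ∈ F.support) {t : ℝ} (ht : 0 ≤ t) :
    t • x ∈ F.support := by
  obtain ⟨σ, hσ, hxσ⟩ := Fan.mem_support_iff.mp hx
  exact Fan.mem_support_iff.mpr ⟨σ, hσ, F.smul_mem hσ ht hxσ⟩

theorem Fan.add_mem_support (hconv : Convex ℝ F.support) {x y : V n} (hx : x ∈ F.support)
    (hy : y ∈ F.support) : x + y ∈ F.support := by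
  have h := F.smul_mem_support (hconv hx hy (by norm_num : (0 : ℝ) ≤ 1 / 2)
    (by norm_num : (0 : ℝ) ≤ 1 / 2) (by norm_num)) (by norm_num : (0 : ℝ) ≤ 2)
  convert h using 1
  module

theorem Fan.sum_smul_mem_support (hconv : Convex ℝ F.support) (hF : F.cones.Nonempty)
    {s : Finset ι} {c : ι → ℝ} {x : ι → V n} (hc : ∀ i ∈ s, 0 ≤ c i)
    (hx : ∀ i ∈ s, x i ∈ F.support) : ∑ i ∈ s, c i • x i ∈ F.support := by
  obtain ⟨σ, hσ⟩ := hF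
  exact Finset.sum_induction _ (· ∈ F.support) (fun _ _ => F.add_mem_support hconv)
    (Fan.mem_support_iff.mpr ⟨σ, hσ, F.zero_mem hσ⟩)
    fun i hi => F.smul_mem_support (hx i hi) (hc i hi)

theorem IsPL.map_sum_smul_of_mem_cone {φ : V n → ℝ} (hφ : IsPL F φ) {σ : Set (V n)}
    (hσ : σ ∈ F.cones) {s : Finset ι} {c : ι → ℝ} {x : ι → V n} (hc : ∀ i ∈ s, 0 ≤ c i)
    (hx : ∀ i ∈ s, x i ∈ σ) : φ (∑ i ∈ s, c i • x i) = ∑ i ∈ s, c i * φ (x i) := by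
  obtain ⟨m, hm⟩ := hφ σ hσ
  rw [hm _ (F.sum_smul_mem hσ hc hx), map_sum]
  exact Finset.sum_congr rfl fun i hi => by rw [map_smul, smul_eq_mul, hm _ (hx i hi)]

theorem IsPL.map_smul_of_mem_support {φ : V n → ℝ} (hφ : IsPL F φ) {x : V n}
    (hx : x ∈ F.support) {t : ℝ} (ht : 0 ≤ t) : φ (t • x) = t * φ x := by
  obtain ⟨σ, hσ, hxσ⟩ := Fan.mem_support_iff.mp hx
  simpa using hφ.map_sum_smul_of_mem_cone hσ (s := {()}) (c := fun _ => t) (x := fun _ => x)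
    (by simpa using ht) (by simpa using hxσ)

theorem IsConvexPLF.map_sum_smul_le {φ : V n → ℝ} (hcvx : IsConvexPLF F φ) (hφ : IsPL F φ)
    (hconv : Convex ℝ F.support) (hF : F.cones.Nonempty) {s : Finset ι} {c : ι → ℝ}
    {x : ι → V n} (hc : ∀ i ∈ s, 0 ≤ c i) (hx : ∀ i ∈ s, x i ∈ F.support) :
    φ (∑ i ∈ s, c i • x i) ≤ ∑ i ∈ s, c i * φ (x i) := by
  classical
  induction s using Finset.cons_induction with
  | empty =>
    obtain ⟨σ, hσ⟩ := hF
    simpa using (hφ.map_sum_smul_of_mem_cone hσ (s := (∅ : Finset ι)) (c := c) (x := x)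
      (by simp) (by simp)).le
  | cons i s hi ih =>
    rw [Finset.sum_cons, Finset.sum_cons]
    have hci := hc i (Finset.mem_cons_self i s)
    have hxi := hx i (Finset.mem_cons_self i s)
    have hc' := fun j hj => hc j (Finset.mem_cons_of_mem hj)
    have hx' := fun j hj => hx j (Finset.mem_cons_of_mem hj)
    calc φ (c i • x i + ∑ j ∈ s, c j • x j)
        ≤ φ (c i • x i) + φ (∑ j ∈ s, c j • x j) :=
          hcvx _ (F.smul_mem_support hxi hci) _ (F.sum_smul_mem_support hconv hF hc' hx')
      _ ≤ c i * φ (x i) + ∑ j ∈ s, c j * φ (x j) := by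
          rw [hφ.map_smul_of_mem_support hxi hci]
          exact add_le_add le_rfl (ih hc' hx')

theorem IsStrictlyConvexPLF.isConvexPLF {φ : V n → ℝ} (hs : IsStrictlyConvexPLF F φ)
    (hφ : IsPL F φ) : IsConvexPLF F φ := by
  intro u hu v hv
  by_cases h : ∃ σ ∈ F.cones, u ∈ σ ∧ v ∈ σ
  · obtain ⟨σ, hσ, huσ, hvσ⟩ := h
    obtain ⟨m, hm⟩ := hφ σ hσ
    rw [hm u huσ, hm v hvσ, hm (u + v) (F.add_mem hσ huσ hvσ), map_add]
  · exact (hs u hu v hv h).le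

theorem IsStrictlyConvexPLF.exists_mem_cone_of_map_sum_eq {φ : V n → ℝ}
    (hs : IsStrictlyConvexPLF F φ) (hφ : IsPL F φ) (hconv : Convex ℝ F.support)
    (hF : F.cones.Nonempty) {s : Finset ι} {x : ι → V n} (hx : ∀ i ∈ s, x i ∈ F.support)
    (heq : φ (∑ i ∈ s, x i) = ∑ i ∈ s, φ (x i)) : ∃ γ ∈ F.cones, ∀ i ∈ s, x i ∈ γ := by
  classical
  have hcvx := hs.isConvexPLF hφ
  induction s using Finset.cons_induction with
  | empty => exact ⟨_, hF.some_mem, by simp⟩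
  | cons i s hi ih =>
    rw [Finset.sum_cons, Finset.sum_cons] at heq
    have hxi := hx i (Finset.mem_cons_self i s)
    have hx' := fun j hj => hx j (Finset.mem_cons_of_mem hj)
    have hS : ∑ j ∈ s, x j ∈ F.support := by
      simpa using F.sum_smul_mem_support hconv hF (c := fun _ => 1) (by simp) hx'
    have h1 := hcvx _ hxi _ hS
    have h2 : φ (∑ j ∈ s, x j) ≤ ∑ j ∈ s, φ (x j) := by
      simpa using hcvx.map_sum_smul_le hφ hconv hF (c := fun _ => 1) (by simp) hx'
    obtain ⟨σ, hσ, hxσ⟩ := ih hx' (by linarith)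
    obtain ⟨δ, hδ, hxiδ, hSδ⟩ : ∃ δ ∈ F.cones, x i ∈ δ ∧ ∑ j ∈ s, x j ∈ δ := by
      by_contra h
      exact (hs _ hxi _ hS h).ne (by linarith)
    have hface := (F.inter_face σ hσ δ hδ).1
    have hSσ : ∑ j ∈ s, x j ∈ σ := by
      simpa using F.sum_smul_mem hσ (c := fun _ => 1) (by simp) hxσ
    have hmem := hface.mem_of_sum_smul_mem (c := fun _ => 1) (by simp) (fun j hj _ => hxσ j hj)
      (by simpa using (⟨hSσ, hSδ⟩ : ∑ j ∈ s, x j ∈ σ ∩ δ))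
    refine ⟨δ, hδ, fun j hj => ?_⟩
    rcases Finset.mem_cons.mp hj with rfl | hj
    · exact hxiδ
    · exact (hmem j hj one_pos).2

end Convexity

section Defect

variable {n : ℕ} {F : Fan n} {ι : Type*}

noncomputable def convexityDefect (F : Fan n) (s : Finset ι) (c : ι → ℝ) (x : ι → V n) :
    Module.Dual ℝ (PLsub F) :=
  ∑ i ∈ s, c i • evalPL F (x i) - evalPL F (∑ i ∈ s, c i • x i)

def IsExtremalInNE (F : Fan n) (ℓ : Module.Dual ℝ (PLsub F)) : Prop :=
  ∀ x ∈ NE F, ∀ y ∈ NE F, ℓ = x + y →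
    (∃ c : ℝ, 0 ≤ c ∧ x = c • ℓ) ∧ (∃ c : ℝ, 0 ≤ c ∧ y = c • ℓ)

theorem evalPL_apply (x : V n) (φ : PLsub F) : evalPL F x φ = (φ : V n → ℝ) x := rfl

theorem sum_smul_evalPL_apply (s : Finset ι) (c : ι → ℝ) (x : ι → V n) (φ : PLsub F) :
    (∑ i ∈ s, c i • evalPL F (x i)) φ = ∑ i ∈ s, c i * (φ : V n → ℝ) (x i) := by
  simp [evalPL]

theorem convexityDefect_apply (s : Finset ι) (c : ι → ℝ) (x : ι → V n) (φ : PLsub F) :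
    convexityDefect F s c x φ =
      ∑ i ∈ s, c i * (φ : V n → ℝ) (x i) - (φ : V n → ℝ) (∑ i ∈ s, c i • x i) := by
  rw [convexityDefect, LinearMap.sub_apply, sum_smul_evalPL_apply]
  rfl

theorem convexityDefect_mem_NE (hconv : Convex ℝ F.support) (hF : F.cones.Nonempty)
    {s : Finset ι} {c : ι → ℝ} {x : ι → V n} (hc : ∀ i ∈ s, 0 ≤ c i)
    (hx : ∀ i ∈ s, x i ∈ F.support) : convexityDefect F s c x ∈ NE F := fun φ hφ => by
  rw [convexityDefect_apply, sub_nonneg]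
  exact IsConvexPLF.map_sum_smul_le hφ φ.2 hconv hF hc hx

theorem convexityDefect_sub_mem_NE (hconv : Convex ℝ F.support) (hF : F.cones.Nonempty)
    {s : Finset ι} {c c' : ι → ℝ} {x : ι → V n} (hc' : ∀ i ∈ s, 0 ≤ c' i)
    (hle : ∀ i ∈ s, c' i ≤ c i) (hx : ∀ i ∈ s, x i ∈ F.support) :
    convexityDefect F s c x - convexityDefect F s c' x ∈ NE F := fun φ hφ => by
  have hsub : ∀ i ∈ s, 0 ≤ c i - c' i := fun i hi => sub_nonneg.mpr (hle i hi)
  have hsplit : ∑ i ∈ s, c i • x i = ∑ i ∈ s, c' i • x i + ∑ i ∈ s, (c i - c' i) • x i := by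
    rw [← Finset.sum_add_distrib]
    exact Finset.sum_congr rfl fun i _ => by module
  have h1 := hφ _ (F.sum_smul_mem_support hconv hF hc' hx) _
    (F.sum_smul_mem_support hconv hF hsub hx)
  have h2 := IsConvexPLF.map_sum_smul_le hφ φ.2 hconv hF hsub hx
  rw [LinearMap.sub_apply, convexityDefect_apply, convexityDefect_apply, hsplit]
  simp only [sub_mul, Finset.sum_sub_distrib] at h2
  linarith

theorem convexityDefect_eq_zero_of_mem_cone {γ : Set (V n)} (hγ : γ ∈ F.cones)
    {s : Finset ι} {c : ι → ℝ} {x : ι → V n} (hc : ∀ i ∈ s, 0 ≤ c i) (hx : ∀ i ∈ s, x i ∈ γ) :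
    convexityDefect F s c x = 0 :=
  LinearMap.ext fun φ => by
    rw [convexityDefect_apply, φ.2.map_sum_smul_of_mem_cone hγ hc hx, sub_self,
      LinearMap.zero_apply]

theorem convexityDefect_const_mul (hconv : Convex ℝ F.support) (hF : F.cones.Nonempty)
    {s : Finset ι} {c : ι → ℝ} {x : ι → V n} (hc : ∀ i ∈ s, 0 ≤ c i)
    (hx : ∀ i ∈ s, x i ∈ F.support) {t : ℝ} (ht : 0 ≤ t) :
    convexityDefect F s (fun i => t * c i) x = t • convexityDefect F s c x :=
  LinearMap.ext fun φ => by
    simp only [convexityDefect_apply, LinearMap.smul_apply, smul_eq_mul, mul_smul,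
      ← Finset.smul_sum, φ.2.map_smul_of_mem_support (F.sum_smul_mem_support hconv hF hc hx) ht,
      mul_sub, Finset.mul_sum, mul_assoc]

theorem IsStrictlyConvexPLF.exists_mem_cone_of_convexityDefect_eq_zero {φ : V n → ℝ}
    (hs : IsStrictlyConvexPLF F φ) (hφ : IsPL F φ) (hconv : Convex ℝ F.support)
    (hF : F.cones.Nonempty) {s : Finset ι} {c : ι → ℝ} {x : ι → V n} (hc : ∀ i ∈ s, 0 ≤ c i)
    (hx : ∀ i ∈ s, x i ∈ F.support) (h0 : convexityDefect F s c x ⟨φ, hφ⟩ = 0) :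
    ∃ γ ∈ F.cones, ∀ i ∈ s, 0 < c i → x i ∈ γ := by
  rw [convexityDefect_apply, sub_eq_zero] at h0
  have h0' : φ (∑ i ∈ s, c i • x i) = ∑ i ∈ s, c i * φ (x i) := h0.symm
  obtain ⟨γ, hγ, hmem⟩ := hs.exists_mem_cone_of_map_sum_eq hφ hconv hF
    (fun i hi => F.smul_mem_support (hx i hi) (hc i hi)) (by
      rw [h0']
      exact Finset.sum_congr rfl fun i hi => (hφ.map_smul_of_mem_support (hx i hi) (hc i hi)).symm)
  refine ⟨γ, hγ, fun i hi hci => ?_⟩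
  simpa [smul_smul, inv_mul_cancel₀ hci.ne'] using F.smul_mem hγ (inv_nonneg.mpr hci.le) (hmem i hi)

theorem IsExtremalInNE.exists_convexityDefect_eq_smul {s : Finset ι} {c c' : ι → ℝ}
    {x : ι → V n} (hext : IsExtremalInNE F (convexityDefect F s c x))
    (hconv : Convex ℝ F.support) (hF : F.cones.Nonempty) (hc' : ∀ i ∈ s, 0 ≤ c' i)
    (hle : ∀ i ∈ s, c' i ≤ c i) (hx : ∀ i ∈ s, x i ∈ F.support) :
    ∃ t : ℝ, 0 ≤ t ∧ convexityDefect F s c' x = t • convexityDefect F s c x :=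
  (hext _ (convexityDefect_mem_NE hconv hF hc' hx) _
    (convexityDefect_sub_mem_NE hconv hF hc' hle hx) (add_sub_cancel _ _).symm).1

theorem sum_smul_evalPL_hat (hsimp : F.Simplicial) {s : Finset ι} (c : ι → ℝ) {x : ι → V n}
    (hx : ∀ i ∈ s, x i ∈ F.rayGens) (v : V n) :
    (∑ i ∈ s, c i • evalPL F (x i)) (F.hat hsimp v) = ∑ i ∈ s, if v = x i then c i else 0 := by
  rw [sum_smul_evalPL_apply]
  exact Finset.sum_congr rfl fun i hi => by
    rw [F.hat_apply_of_mem_rayGens hsimp v (hx i hi), mul_ite, mul_one, mul_zero]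

theorem primDual_hat (hsimp : F.Simplicial) {P S : Finset (V n)} {b : V n → ℝ}
    (hP : ↑P ⊆ F.rayGens) (hPS : IsPrimRel F P S b) (v : V n) :
    primDual F P (F.hat hsimp v) = primVec P S b v := by
  classical
  obtain ⟨σ, ⟨hσ, -, -⟩, hSσ, -, hb, hsum⟩ := hPS
  have hS : ∀ s ∈ S, s ∈ F.rayGens := fun s hs => F.coneRays_subset_rayGens hσ (hSσ hs)
  have hP1 : ∑ w ∈ P, evalPL F w = ∑ w ∈ P, (1 : ℝ) • evalPL F w := by simp
  have hsumv : (F.hat hsimp v : V n → ℝ) (∑ w ∈ P, w) = if v ∈ S then b v else 0 := by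
    rw [hsum, (F.hat hsimp v).2.map_sum_smul_of_mem_cone hσ (fun s hs => (hb s hs).le)
      fun s hs => coneRays_subset σ (hSσ hs)]
    rw [Finset.sum_congr rfl fun s hs => by rw [F.hat_apply_of_mem_rayGens hsimp v (hS s hs)]]
    simp [mul_ite, Finset.sum_ite_eq]
  rw [primDual, LinearMap.sub_apply, hP1, sum_smul_evalPL_hat hsimp _ fun w hw => hP hw,
    Finset.sum_ite_eq, evalPL_apply, hsumv, primVec]
  split_ifs <;> ring

theorem primDual_image {ρ : ι → V n} (hρ : Function.Injective ρ)
    (s : Finset ι) : primDual F (s.image ρ) = convexityDefect F s (fun _ => 1) ρ := by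
  simp [primDual, convexityDefect, Finset.sum_image fun i _ j _ h => hρ h]

end Defect

section ExtremalRelation

variable {n : ℕ} {F : Fan n} {ι : Type*} [Fintype ι] {ρ : ι → V n} {a : ι → ℝ}

theorem sum_smul_evalPL_eq_convexityDefect {γ : Set (V n)} (hγ : γ ∈ F.cones)
    (hrel : ∑ i, a i • ρ i = 0) (hneg : ∀ i, a i ≤ 0 → ρ i ∈ γ) :
    ∑ i, a i • evalPL F (ρ i) = convexityDefect F {i | 0 < a i} a ρ := by
  classical
  ext φ
  have hrel' : ∑ i ∈ {i | 0 < a i}, a i • ρ i = ∑ i ∈ {i | ¬0 < a i}, (-a i) • ρ i := by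
    rw [← Finset.sum_filter_add_sum_filter_not Finset.univ (0 < a ·)] at hrel
    simp only [neg_smul, Finset.sum_neg_distrib]
    exact eq_neg_of_add_eq_zero_left hrel
  have hlin := φ.2.map_sum_smul_of_mem_cone hγ (s := {i | ¬0 < a i}) (c := fun i => -a i)
    (x := ρ) (fun i hi => by simp at hi; linarith) fun i hi => hneg i (by simpa using hi)
  rw [convexityDefect_apply, hrel', hlin, sum_smul_evalPL_apply,
    ← Finset.sum_filter_add_sum_filter_not Finset.univ (0 < a ·)]
  simp only [neg_mul, Finset.sum_neg_distrib, sub_neg_eq_add]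

theorem not_forall_pos_mem_cone
    (hdef : ∑ i, a i • evalPL F (ρ i) = convexityDefect F {i | 0 < a i} a ρ)
    (hnz : ∑ i, a i • evalPL F (ρ i) ≠ 0) {γ : Set (V n)} (hγ : γ ∈ F.cones) :
    ¬ ∀ i, 0 < a i → ρ i ∈ γ := fun h =>
  hnz (hdef ▸ convexityDefect_eq_zero_of_mem_cone hγ (fun i hi => (by simpa using hi : 0 < a i).le)
    fun i hi => h i (by simpa using hi))

theorem exists_mem_cone_of_pos_of_ne (hsimp : F.Simplicial) (hqp : F.QuasiProjective)
    (hconv : Convex ℝ F.support) (hρ : ∀ i, ρ i ∈ F.rayGens) (hinj : Function.Injective ρ)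
    (hdef : ∑ i, a i • evalPL F (ρ i) = convexityDefect F {i | 0 < a i} a ρ)
    (hext : IsExtremalInNE F (∑ i, a i • evalPL F (ρ i))) {i₀ : ι} (hi₀ : 0 < a i₀) :
    ∃ γ ∈ F.cones, ∀ i, 0 < a i → i ≠ i₀ → ρ i ∈ γ := by
  classical
  have hF : F.cones.Nonempty := ⟨_, (hρ i₀).2⟩
  have hsupp : ∀ i ∈ ({i | 0 < a i} : Finset ι), ρ i ∈ F.support := fun i _ =>
    F.mem_support_of_mem_rayGens (hρ i)
  set c : ι → ℝ := fun i => if i = i₀ then 0 else a i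
  have hc : ∀ i ∈ ({i | 0 < a i} : Finset ι), 0 ≤ c i := fun i hi => by
    simp only [Finset.mem_filter, Finset.mem_univ, true_and] at hi
    simp only [c]; split_ifs <;> linarith
  obtain ⟨t, ht, hct⟩ := (hdef ▸ hext).exists_convexityDefect_eq_smul hconv hF hc
    (fun i _ => by simp only [c]; split_ifs with h; exacts [h ▸ hi₀.le, le_rfl]) hsupp
  have hhat := LinearMap.congr_fun hct (F.hat hsimp (ρ i₀))
  have hle : convexityDefect F {i | 0 < a i} c ρ (F.hat hsimp (ρ i₀)) ≤ 0 := by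
    rw [convexityDefect, LinearMap.sub_apply, sum_smul_evalPL_hat hsimp _ fun i _ => hρ i,
      Finset.sum_eq_zero fun i _ => by
        by_cases h : i = i₀
        · simp [c, h]
        · simp [hinj.eq_iff, Ne.symm h],
      evalPL_apply]
    linarith [F.hat_nonneg hsimp (ρ i₀) (F.sum_smul_mem_support hconv hF hc hsupp)]
  rw [LinearMap.smul_apply, ← hdef, sum_smul_evalPL_hat hsimp _ fun i _ => hρ i] at hhat
  simp only [hinj.eq_iff, Finset.sum_ite_eq, Finset.mem_univ, if_true, smul_eq_mul] at hhat
  have ht0 : t = 0 := le_antisymm (nonpos_of_mul_nonpos_left (hhat ▸ hle) hi₀) ht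
  rw [ht0, zero_smul] at hct
  obtain ⟨φ, hφ, hs⟩ := hqp
  obtain ⟨γ, hγ, hmem⟩ := hs.exists_mem_cone_of_convexityDefect_eq_zero hφ hconv hF hc hsupp
    (by rw [hct, LinearMap.zero_apply])
  exact ⟨γ, hγ, fun i hi hne => hmem i (by simpa using hi) (by simpa [c, hne] using hi)⟩

theorem primVec_eq_smul (hsimp : F.Simplicial) (hconv : Convex ℝ F.support)
    (hρ : ∀ i, ρ i ∈ F.rayGens) (hinj : Function.Injective ρ)
    (hdef : ∑ i, a i • evalPL F (ρ i) = convexityDefect F {i | 0 < a i} a ρ)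
    (hext : IsExtremalInNE F (∑ i, a i • evalPL F (ρ i)))
    {P : Finset (V n)} (hP : P = Finset.image ρ {i | 0 < a i})
    (hnc : ∀ γ ∈ F.cones, ¬ ↑P ⊆ γ) {S : Finset (V n)} {b : V n → ℝ}
    (hPS : IsPrimRel F P S b) :
    ∃ c : ℝ, 0 < c ∧ primVec P S b = c • fun v => ∑ i, if v = ρ i then a i else 0 := by
  classical
  obtain ⟨σ, ⟨hσ, -, -⟩, hSσ, -⟩ := id hPS
  have hF : F.cones.Nonempty := ⟨σ, hσ⟩
  have hsupp : ∀ i ∈ ({i | 0 < a i} : Finset ι), ρ i ∈ F.support := fun i _ =>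
    F.mem_support_of_mem_rayGens (hρ i)
  have hne : ({i | 0 < a i} : Finset ι).Nonempty := by
    by_contra h
    exact hnc σ hσ (by simp [hP, Finset.not_nonempty_iff_eq_empty.mp h])
  set α := Finset.inf' _ hne a
  have hα : 0 < α := (Finset.lt_inf'_iff hne).mpr fun i hi => by simpa using hi
  obtain ⟨t, ht, hαt⟩ := (hdef ▸ hext).exists_convexityDefect_eq_smul (c' := fun _ => α * 1)
    hconv hF (fun _ _ => by positivity) (fun i hi => by simpa using Finset.inf'_le a hi) hsupp
  rw [convexityDefect_const_mul hconv hF (fun _ _ => zero_le_one) hsupp hα.le,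
    ← primDual_image hinj, ← hP, ← hdef] at hαt
  have hval : ∀ v, α * primVec P S b v = t * ∑ i, if v = ρ i then a i else 0 := fun v => by
    have := LinearMap.congr_fun hαt (F.hat hsimp v)
    rw [LinearMap.smul_apply, LinearMap.smul_apply, primDual_hat hsimp
      (by simp [hP, Set.subset_def, hρ]) hPS, sum_smul_evalPL_hat hsimp _ fun i _ => hρ i] at this
    simpa only [smul_eq_mul] using this
  refine ⟨t / α, div_pos (ht.lt_of_ne ?_) hα, funext fun v => ?_⟩
  · rintro rfl
    refine hnc σ hσ fun v hv => coneRays_subset σ (hSσ (Finset.mem_coe.mpr ?_))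
    have h0 : primVec P S b v = 0 := by simpa [hα.ne'] using hval v
    by_contra hvS
    simp [primVec, Finset.mem_coe.mp hv, hvS] at h0
  · rw [Pi.smul_apply, smul_eq_mul, div_mul_eq_mul_div, ← hval v]
    field_simp

theorem isPrimColl_of_isExtremalInNE (hsimp : F.Simplicial) (hqp : F.QuasiProjective)
    (hconv : Convex ℝ F.support) {γ : Set (V n)} (hγ : γ ∈ F.cones)
    (hinj : Function.Injective ρ) (hρ : ∀ i, ρ i ∈ F.rayGens) (hrel : ∑ i, a i • ρ i = 0)
    (hneg : ∀ i, a i ≤ 0 → ρ i ∈ γ) (hnz : ∑ i, a i • evalPL F (ρ i) ≠ 0)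
    (hext : IsExtremalInNE F (∑ i, a i • evalPL F (ρ i))) :
    ∀ P : Finset (V n), ↑P = ρ '' {i | 0 < a i} →
      IsPrimColl F P ∧
      ∀ (S : Finset (V n)) (b : V n → ℝ), IsPrimRel F P S b →
        ∃ c : ℝ, 0 < c ∧ primVec P S b = c • fun v : V n => ∑ i, if v = ρ i then a i else 0 := by
  classical
  intro P hP
  have hdef := sum_smul_evalPL_eq_convexityDefect hγ hrel hneg
  have hnc : ∀ δ ∈ F.cones, ¬ ↑P ⊆ δ := fun δ hδ hPδ =>
    not_forall_pos_mem_cone hdef hnz hδ fun i hi => hPδ (hP ▸ ⟨i, hi, rfl⟩)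
  refine ⟨⟨hP ▸ by rintro _ ⟨i, -, rfl⟩; exact hρ i, hnc, fun Q hQ => ?_⟩,
    fun S b => primVec_eq_smul hsimp hconv hρ hinj hdef hext
      (Finset.coe_injective (by simp [hP])) hnc⟩
  obtain ⟨x, hxP, hxQ⟩ := Finset.exists_of_ssubset hQ
  obtain ⟨i₀, hi₀, rfl⟩ : x ∈ ρ '' {i | 0 < a i} := hP ▸ Finset.mem_coe.mpr hxP
  obtain ⟨δ, hδ, hmem⟩ := exists_mem_cone_of_pos_of_ne hsimp hqp hconv hρ hinj hdef hext hi₀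
  refine ⟨δ, hδ, fun w hw => ?_⟩
  obtain ⟨i, hi, rfl⟩ : w ∈ ρ '' {i | 0 < a i} := hP ▸ Finset.mem_coe.mpr (hQ.subset hw)
  exact hmem i hi (by rintro rfl; exact hxQ hw)

end ExtremalRelation

/-- **Extremal walls give primitive collections.** Let `Σ` be a simplicial
quasi-projective fan in `ℝ^n` with convex support of dimension `n`, let `τ` be
an interior wall with `τ(1) = {ρ₁,…,ρ_{n−1}}` whose adjacent `n`-dimensional
cones are generated by `τ(1) ∪ {ρₙ}` and `τ(1) ∪ {ρₙ₊₁}`, and let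
`∑ aᵢρᵢ = 0` with `aₙ > 0`, `aₙ₊₁ = 1` be its wall relation.  If the associated
functional `l_τ = ∑ aᵢ·eval_{ρᵢ}` spans an extremal ray of the Mori cone
`NE(Σ)`, then `P = {ρᵢ : aᵢ > 0}` is a primitive collection for `Σ`, and any
primitive relation vector `a_P` of `P` equals `a_τ` up to a positive constant.
(Here indices `0,…,n-2` of `Fin (n+1)` correspond to `ρ₁,…,ρ_{n−1}`, index
`n-1` to `ρₙ` and index `n` to `ρₙ₊₁`.) -/
theorem extremal_wall_primitive_collection {n : ℕ} (F : Fan n)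
    (hsimp : F.Simplicial) (hqp : F.QuasiProjective)
    (hconv : Convex ℝ F.support)
    (τ σ σ' : Set (V n)) (hτ : F.IsInteriorWall τ)
    (hσ : σ ∈ F.conesDim n) (hσ' : σ' ∈ F.conesDim n)
    (ρ : Fin (n + 1) → V n) (a : Fin (n + 1) → ℝ)
    (hinj : Function.Injective ρ)
    (hτ1 : coneRays τ = ρ '' {i | (i : ℕ) < n - 1})
    (hσ1 : coneRays σ = ρ '' {i | (i : ℕ) < n - 1} ∪ {ρ ⟨n - 1, by omega⟩})
    (hσ'1 : coneRays σ' = ρ '' {i | (i : ℕ) < n - 1} ∪ {ρ ⟨n, by omega⟩})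
    (hrel : ∑ i, a i • ρ i = 0)
    (han : 0 < a ⟨n - 1, by omega⟩) (han1 : a ⟨n, by omega⟩ = 1)
    (hnz : (∑ i, a i • evalPL F (ρ i)) ≠ 0)
    (hext : ∀ x ∈ NE F, ∀ y ∈ NE F,
      (∑ i, a i • evalPL F (ρ i)) = x + y →
        (∃ c : ℝ, 0 ≤ c ∧ x = c • (∑ i, a i • evalPL F (ρ i))) ∧
        (∃ c : ℝ, 0 ≤ c ∧ y = c • (∑ i, a i • evalPL F (ρ i)))) :
    ∀ P : Finset (V n), ↑P = ρ '' {i | 0 < a i} →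
      IsPrimColl F P ∧
      ∀ (S : Finset (V n)) (b : V n → ℝ), IsPrimRel F P S b →
        ∃ c : ℝ, 0 < c ∧
          primVec P S b = c • (fun v : V n => ∑ i, if v = ρ i then a i else 0) := by
  have hray : ∀ i, ρ i ∈ F.rayGens := fun i => by
    have := i.isLt
    by_cases hi : (i : ℕ) < n
    · refine F.coneRays_subset_rayGens hσ.1 (hσ1 ▸ ?_)
      by_cases hi' : (i : ℕ) < n - 1
      · exact Or.inl ⟨i, hi', rfl⟩
      · exact Or.inr (congrArg ρ (Fin.ext (by simp only; omega)))
    · exact F.coneRays_subset_rayGens hσ'.1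
        (hσ'1 ▸ Or.inr (congrArg ρ (Fin.ext (by simp only; omega))))
  refine isPrimColl_of_isExtremalInNE hsimp hqp hconv hτ.1 hinj hray hrel (fun i hi => ?_) hnz hext
  have h1 : (i : ℕ) ≠ n - 1 := fun h => by
    rw [show i = ⟨n - 1, by omega⟩ from Fin.ext h] at hi; linarith
  have h2 : (i : ℕ) ≠ n := fun h => by
    rw [show i = ⟨n, by omega⟩ from Fin.ext h, han1] at hi; linarith
  exact coneRays_subset τ (hτ1 ▸ ⟨i, show (i : ℕ) < n - 1 by have := i.isLt; omega, rfl⟩)
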